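/- Let N, m be natural numbers, let F be a field satisfying ringChar F = 0 or 63 ≤ ringChar F, and let Cl : Fin m → Fin 3 → (Fin N × Bool) encode a 3-CNF formula in which the three variables of each clause are pairwise distinct. If a finset S : Finset I satisfies φ_2(S) = t, then: (i) Sum.inl 0 ∈ S and Sum.inl 1 ∈ S; (ii) for every i : Fin N, exactly one of the two memberships Sum.inr (Sum.inl (i, true)) ∈ S and Sum.inr (Sum.inl (i, false)) ∈ S holds; and (iii) for every j : Fin m there exists k : Fin 3 with Sum.inr (Sum.inl (Cl j k)) ∈ S. -/

import Mathlib

open Finset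

/-- The first coordinate of the Subset-φ instance. -/
def coord0 (N m : ℕ) : Fin (1 + N + m) := ⟨0, by omega⟩

/-- The coordinate of variable `x_i`. -/
def coordVar (N m : ℕ) (i : Fin N) : Fin (1 + N + m) :=
  ⟨1 + i.val, by have := i.isLt; omega⟩

/-- The coordinate of clause `C_j`. -/
def coordCl (N m : ℕ) (j : Fin m) : Fin (1 + N + m) :=
  ⟨1 + N + j.val, by have := j.isLt; omega⟩

/-- The elements of the Subset-`φ_2` instance constructed from a 3-CNF formula `Cl`. -/
def subsetPhi2Elem (F : Type*) [Field F] (N m : ℕ)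
    (Cl : Fin m → Fin 3 → (Fin N × Bool)) :
    (Fin 2 ⊕ ((Fin N × Bool) ⊕ (Fin m × Fin 3))) → Fin (1 + N + m) → F
  | Sum.inl k, c =>
      if c = coord0 N m then 1
      else if k.val ≠ 0 ∧ ∃ i : Fin N, c = coordVar N m i then 1
      else 0
  | Sum.inr (Sum.inl (i, b)), c =>
      if c = coordVar N m i then 1
      else if ∃ j : Fin m, c = coordCl N m j ∧ ∃ k : Fin 3, Cl j k = (i, b) then 1
      else 0
  | Sum.inr (Sum.inr (j, k)), c =>
      if c = coordCl N m j then
        (if k.val = 0 then (9 : F) else if k.val = 1 then (4 : F) else (2 : F))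
      else 0

/-- The target vector of the Subset-`φ_2` instance: value 1 at coordinate 0 and at
every variable coordinate, and value 9 at every clause coordinate. -/
def subsetPhi2Target (F : Type*) [Field F] (N m : ℕ) : Fin (1 + N + m) → F :=
  fun c => if ∃ j : Fin m, c = coordCl N m j then (9 : F) else 1

/-! At every coordinate `c` the hypothesis says that the pairwise products of the values
`a e c`, `e ∈ S`, sum to `t c`. At coordinate 0 and at the variable coordinates all values are
0 or 1, so this sum is `C(k, 2)` with `k` the number of chosen elements taking the value 1 there;
`C(k, 2) = 1` forces `k = 2` (note `C(3, 2) = 3 ≠ 1` since `2 ≠ 0` in `F`). This gives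
`α_0, α_1 ∈ S` and then exactly one literal per variable. At a clause coordinate, if no literal
of the clause were chosen, only the gadgets `9, 4, 2` would contribute, and their pair sums
`0, 8, 18, 36, 62` all differ from `9` in characteristic 0 or at least 63. -/

namespace Finset
variable {α β R : Type*} [CommSemiring R]

theorem sum_powersetCard_prod_filter (S : Finset α) (n : ℕ) (f : α → R) (p : α → Prop)
    [DecidablePred p] (hf : ∀ e ∈ S, ¬ p e → f e = 0) :
    ∑ T ∈ S.powersetCard n, ∏ e ∈ T, f e = ∑ T ∈ (S.filter p).powersetCard n, ∏ e ∈ T, f e := by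
  refine (sum_subset (powersetCard_mono (filter_subset p S)) fun T hTS hTp => ?_).symm
  rw [mem_powersetCard] at hTS hTp
  obtain ⟨e, heT, he⟩ := not_subset.1 fun h => hTp ⟨h, hTS.2⟩
  exact prod_eq_zero heT (hf e (hTS.1 heT) fun hp => he (mem_filter.2 ⟨hTS.1 heT, hp⟩))

theorem sum_powersetCard_prod_ite_mem [DecidableEq α] (S D : Finset α) (n : ℕ) :
    ∑ T ∈ S.powersetCard n, ∏ e ∈ T, (if e ∈ D then (1 : R) else 0) = (#(S ∩ D)).choose n := by
  rw [sum_powersetCard_prod_filter S n _ (· ∈ D) fun e _ he => if_neg he, filter_mem_eq_inter,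
    ← card_powersetCard, card_eq_sum_ones, Nat.cast_sum, Nat.cast_one]
  refine sum_congr rfl fun T hT => prod_eq_one fun e he => if_pos ?_
  exact (mem_inter.1 ((mem_powersetCard.1 hT).1 he)).2

theorem sum_powersetCard_prod_preimage (S : Finset α) (n : ℕ) (f : α → R)
    (ι : β ↪ α) (hf : ∀ e ∈ S, e ∉ Set.range ι → f e = 0) :
    ∑ T ∈ S.powersetCard n, ∏ e ∈ T, f e =
      ∑ T ∈ (S.preimage ι ι.injective.injOn).powersetCard n, ∏ k ∈ T, f (ι k) := by
  classical
  rw [sum_powersetCard_prod_filter S n f (· ∈ Set.range ι) hf,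
    ← image_preimage ι S ι.injective.injOn, ← map_eq_image, powersetCard_map, sum_map]
  simp

theorem card_inter_eq_sum_ite [DecidableEq α] (S D : Finset α) :
    #(S ∩ D) = ∑ d ∈ D, if d ∈ S then 1 else 0 := by
  rw [inter_comm, ← filter_mem_eq_inter, card_filter]

end Finset

theorem natCast_inj_of_lt_ringChar {R : Type*} [NonAssocRing R] {n a b : ℕ}
    (hR : ringChar R = 0 ∨ n ≤ ringChar R) (ha : a < n) (hb : b < n) (h : (a : R) = b) :
    a = b := by
  have hab := (CharP.natCast_eq_natCast R (ringChar R)).1 h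
  rcases hR with h0 | hn
  · rwa [h0, Nat.modEq_zero_iff] at hab
  · exact hab.eq_of_lt_of_lt (ha.trans_le hn) (hb.trans_le hn)

theorem gadgetWeights_sum_pairs_lt_and_ne_nine :
    ∀ U : Finset (Fin 3), (∑ T ∈ U.powersetCard 2, ∏ k ∈ T, ![9, 4, 2] k) < 63 ∧
      ∑ T ∈ U.powersetCard 2, ∏ k ∈ T, ![9, 4, 2] k ≠ 9 := by
  decide

section SubsetPhi2

variable {F : Type*} [Field F] {N m : ℕ} (Cl : Fin m → Fin 3 → (Fin N × Bool))

lemma coord0_ne_coordVar (i : Fin N) : coord0 N m ≠ coordVar N m i := by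
  simp only [coord0, coordVar, ne_eq, Fin.mk.injEq]; omega

lemma coord0_ne_coordCl (j : Fin m) : coord0 N m ≠ coordCl N m j := by
  simp only [coord0, coordCl, ne_eq, Fin.mk.injEq]; omega

lemma coordVar_ne_coordCl (i : Fin N) (j : Fin m) : coordVar N m i ≠ coordCl N m j := by
  simp only [coordVar, coordCl, ne_eq, Fin.mk.injEq]; have := i.isLt; omega

lemma coordVar_inj {i i' : Fin N} : coordVar N m i = coordVar N m i' ↔ i = i' := by
  simp only [coordVar, Fin.ext_iff]; omega

lemma coordCl_inj {j j' : Fin m} : coordCl N m j = coordCl N m j' ↔ j = j' := by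
  simp only [coordCl, Fin.ext_iff]; omega

lemma subsetPhi2Target_coord0 : subsetPhi2Target F N m (coord0 N m) = 1 := by
  simp [subsetPhi2Target, coord0_ne_coordCl]

lemma subsetPhi2Target_coordVar (i : Fin N) : subsetPhi2Target F N m (coordVar N m i) = 1 := by
  simp [subsetPhi2Target, coordVar_ne_coordCl]

lemma subsetPhi2Target_coordCl (j : Fin m) : subsetPhi2Target F N m (coordCl N m j) = 9 :=
  if_pos ⟨j, rfl⟩

lemma subsetPhi2Elem_coord0 (e : Fin 2 ⊕ ((Fin N × Bool) ⊕ (Fin m × Fin 3))) :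
    subsetPhi2Elem F N m Cl e (coord0 N m) =
      if e ∈ ({Sum.inl 0, Sum.inl 1} : Finset _) then 1 else 0 := by
  rcases e with k | ⟨i, b⟩ | ⟨j, k⟩
  · fin_cases k <;> simp [subsetPhi2Elem]
  all_goals simp [subsetPhi2Elem, coord0_ne_coordVar, coord0_ne_coordCl]

lemma subsetPhi2Elem_coordVar (i : Fin N) (e : Fin 2 ⊕ ((Fin N × Bool) ⊕ (Fin m × Fin 3))) :
    subsetPhi2Elem F N m Cl e (coordVar N m i) =
      if e ∈ ({Sum.inl 1, Sum.inr (Sum.inl (i, true)), Sum.inr (Sum.inl (i, false))} :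
        Finset _) then 1 else 0 := by
  rcases e with k | ⟨i', b⟩ | ⟨j, k⟩
  · fin_cases k <;> simp [subsetPhi2Elem, (coord0_ne_coordVar i).symm]
  · cases b <;> simp [subsetPhi2Elem, coordVar_inj, (coordVar_ne_coordCl _ _).symm, eq_comm]
  · simp [subsetPhi2Elem, coordVar_ne_coordCl]

def clauseGadget (j : Fin m) : Fin 3 ↪ Fin 2 ⊕ ((Fin N × Bool) ⊕ (Fin m × Fin 3)) :=
  ⟨fun k => Sum.inr (Sum.inr (j, k)), fun k k' h => by simpa using h⟩

@[simp]
lemma clauseGadget_apply (j : Fin m) (k : Fin 3) :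
    (clauseGadget j k : Fin 2 ⊕ ((Fin N × Bool) ⊕ (Fin m × Fin 3))) = Sum.inr (Sum.inr (j, k)) :=
  rfl

lemma subsetPhi2Elem_clauseGadget (j : Fin m) (k : Fin 3) :
    subsetPhi2Elem F N m Cl (clauseGadget j k) (coordCl N m j) = ((![9, 4, 2] k : ℕ) : F) := by
  fin_cases k <;> simp [subsetPhi2Elem]

lemma subsetPhi2Elem_coordCl_eq_zero {j : Fin m} {e : Fin 2 ⊕ ((Fin N × Bool) ⊕ (Fin m × Fin 3))}
    (hlit : ∀ k, e ≠ Sum.inr (Sum.inl (Cl j k))) (hgad : e ∉ Set.range (clauseGadget j)) :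
    subsetPhi2Elem F N m Cl e (coordCl N m j) = 0 := by
  rcases e with k | ⟨i, b⟩ | ⟨j', k⟩
  · simp [subsetPhi2Elem, (coord0_ne_coordCl j).symm, (coordVar_ne_coordCl _ j).symm]
  · simp only [subsetPhi2Elem, (coordVar_ne_coordCl i j).symm, coordCl_inj, if_false]
    refine if_neg ?_
    rintro ⟨_, rfl, k, hk⟩
    exact hlit k (by rw [hk])
  · obtain rfl | hj := eq_or_ne j' j
    · exact absurd ⟨k, rfl⟩ hgad
    · simp [subsetPhi2Elem, coordCl_inj, hj.symm]

variable {Cl} {S : Finset (Fin 2 ⊕ ((Fin N × Bool) ⊕ (Fin m × Fin 3)))}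

lemma alpha_mem_of_sum_coord0
    (h : ∑ T ∈ S.powersetCard 2, ∏ e ∈ T, subsetPhi2Elem F N m Cl e (coord0 N m) = 1) :
    Sum.inl 0 ∈ S ∧ Sum.inl 1 ∈ S := by
  simp only [subsetPhi2Elem_coord0, sum_powersetCard_prod_ite_mem, card_inter_eq_sum_ite,
    sum_pair (show (Sum.inl 0 : Fin 2 ⊕ _) ≠ Sum.inl 1 by simp)] at h
  split_ifs at h with h0 h1 h1 <;> norm_num [Nat.choose] at h
  exact ⟨h0, h1⟩

lemma xor_lit_mem_of_sum_coordVar (hchar : ringChar F = 0 ∨ 63 ≤ ringChar F) {i : Fin N}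
    (h1 : Sum.inl 1 ∈ S)
    (h : ∑ T ∈ S.powersetCard 2, ∏ e ∈ T, subsetPhi2Elem F N m Cl e (coordVar N m i) = 1) :
    Xor (Sum.inr (Sum.inl (i, true)) ∈ S) (Sum.inr (Sum.inl (i, false)) ∈ S) := by
  simp only [subsetPhi2Elem_coordVar, sum_powersetCard_prod_ite_mem, card_inter_eq_sum_ite] at h
  rw [sum_insert (by simp), sum_pair (by simp), if_pos h1] at h
  split_ifs at h with hT hF hF <;> norm_num [Nat.choose] at h
  · exact absurd (natCast_inj_of_lt_ringChar hchar (a := 3) (b := 1) (by norm_num) (by norm_num)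
      (by exact_mod_cast h)) (by norm_num)
  · exact Or.inl ⟨hT, hF⟩
  · exact Or.inr ⟨hF, hT⟩

lemma exists_lit_mem_of_sum_coordCl (hchar : ringChar F = 0 ∨ 63 ≤ ringChar F) {j : Fin m}
    (h : ∑ T ∈ S.powersetCard 2, ∏ e ∈ T, subsetPhi2Elem F N m Cl e (coordCl N m j) = 9) :
    ∃ k, Sum.inr (Sum.inl (Cl j k)) ∈ S := by
  by_contra! hno
  rw [sum_powersetCard_prod_preimage S 2 _ (clauseGadget j) fun e he =>
    subsetPhi2Elem_coordCl_eq_zero Cl fun k hk => hno k (hk ▸ he)] at h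
  simp only [subsetPhi2Elem_clauseGadget] at h
  obtain ⟨hlt, hne⟩ :=
    gadgetWeights_sum_pairs_lt_and_ne_nine (S.preimage _ (clauseGadget j).injective.injOn)
  exact hne (natCast_inj_of_lt_ringChar hchar hlt (by norm_num) (by exact_mod_cast h))

end SubsetPhi2

theorem subsetPhi_two_soundness_general (N m : ℕ) (F : Type*) [Field F]
    (hchar : ringChar F = 0 ∨ 63 ≤ ringChar F)
    (Cl : Fin m → Fin 3 → (Fin N × Bool))
    (S : Finset (Fin 2 ⊕ ((Fin N × Bool) ⊕ (Fin m × Fin 3))))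
    (hS : ∀ c : Fin (1 + N + m),
      ∑ T ∈ S.powersetCard 2, ∏ e ∈ T, subsetPhi2Elem F N m Cl e c =
        subsetPhi2Target F N m c) :
    (Sum.inl 0 ∈ S ∧ Sum.inl 1 ∈ S) ∧
    (∀ i : Fin N,
      Xor' (Sum.inr (Sum.inl (i, true)) ∈ S) (Sum.inr (Sum.inl (i, false)) ∈ S)) ∧
    (∀ j : Fin m, ∃ k : Fin 3, Sum.inr (Sum.inl (Cl j k)) ∈ S) := by
  have hα := alpha_mem_of_sum_coord0 ((hS _).trans subsetPhi2Target_coord0)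
  exact ⟨hα, fun i => xor_lit_mem_of_sum_coordVar hchar hα.2
    ((hS _).trans (subsetPhi2Target_coordVar i)),
    fun j => exists_lit_mem_of_sum_coordCl hchar ((hS _).trans (subsetPhi2Target_coordCl j))⟩

/-- Soundness of the Subset-`φ_2` reduction (`char F = 0` or `≥ 63`): any subset `S`
whose second elementary symmetric polynomial equals the target vector must contain
both special elements `α_0, α_1`, exactly one literal element per variable, and at
least one literal element of every clause. -/
theorem subsetPhi_two_soundness (N m : ℕ) (F : Type*) [Field F]
    (hchar : ringChar F = 0 ∨ 63 ≤ ringChar F)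
    (Cl : Fin m → Fin 3 → (Fin N × Bool))
    (hdist : ∀ j : Fin m, ∀ k₁ k₂ : Fin 3, k₁ ≠ k₂ → (Cl j k₁).1 ≠ (Cl j k₂).1)
    (S : Finset (Fin 2 ⊕ ((Fin N × Bool) ⊕ (Fin m × Fin 3))))
    (hS : ∀ c : Fin (1 + N + m),
      ∑ T ∈ S.powersetCard 2, ∏ e ∈ T, subsetPhi2Elem F N m Cl e c =
        subsetPhi2Target F N m c) :
    (Sum.inl 0 ∈ S ∧ Sum.inl 1 ∈ S) ∧
    (∀ i : Fin N,
      Xor' (Sum.inr (Sum.inl (i, true)) ∈ S) (Sum.inr (Sum.inl (i, false)) ∈ S)) ∧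
    (∀ j : Fin m, ∃ k : Fin 3, Sum.inr (Sum.inl (Cl j k)) ∈ S) :=
  subsetPhi_two_soundness_general N m F hchar Cl S hS
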